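/- Let p be a prime and k, N, s ≥ 1 integers. Then in ℚ_p: (p^k·N)^s · H_{p^k N}(s) = N^s · H_N(s) + ∑_{l ≥ 0} binom(−s,l) · N^s · (∑_{0 ≤ n < N} n^l) · (p^k)^{s+l} · H_{p^k}(s+l), the family indexed by l ≥ 0 being summable in ℚ_p. -/

import Mathlib

open Finset

/-- The generalized binomial coefficient `binom(−s,l) = (−1)^l · C(s+l−1, l) ∈ ℤ`. -/
def negBinom (s l : ℕ) : ℤ := (-1) ^ l * (Nat.choose (s + l - 1) l : ℤ)

/-- The depth-one multiple harmonic sum `H_N(s) = ∑_{0<n<N} 1/n^s`, viewed in `ℚ_p`. -/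
noncomputable def H1 (p : ℕ) [Fact p.Prime] (N s : ℕ) : ℚ_[p] :=
  ∑ n ∈ Finset.Ioo 0 N, 1 / (n : ℚ_[p]) ^ s

/-!
Write `0 < n < p^k N` as `n = p^k m + r` with `m < N` and `r < p^k`. The terms with `r = 0`
give `N^s H_N(s)`. For `r ≠ 0` we have `|p^k m|_p < |r|_p`, so the binomial series
`(r + p^k m)^{-s} = ∑_l binom(-s,l) (p^k m)^l r^{-s-l}` converges; summing these finitely many
series over `(m, r)` and collecting, for each `l`, the powers of `m` and of `r` gives the `l`-th
term of the right-hand side.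
-/

section BinomialSeries

variable {K : Type*} [NormedField K]

theorem hasSum_negBinom_mul_pow (s : ℕ) {x : K} (hx : ‖x‖ < 1) :
    HasSum (fun l => (negBinom s l : K) * x ^ l) ((1 + x) ^ s)⁻¹ := by
  cases s with
  | zero =>
    convert hasSum_ite_eq 0 (1 : K) using 1
    · funext l
      cases l <;> simp [negBinom]
    · simp
  | succ s =>
    convert hasSum_choose_mul_geometric_of_norm_lt_one s (r := -x) (by rwa [norm_neg]) using 1
    · funext l
      rw [negBinom, neg_pow, show s + 1 + l - 1 = l + s by omega, Nat.choose_symm_add]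
      push_cast
      ring
    · simp [sub_neg_eq_add]

theorem hasSum_negBinom_mul_pow_div (s : ℕ) {r y : K} (h : ‖y‖ < ‖r‖) :
    HasSum (fun l => (negBinom s l : K) * y ^ l / r ^ (s + l)) (1 / (r + y) ^ s) := by
  have hr : r ≠ 0 := norm_pos_iff.mp ((norm_nonneg y).trans_lt h)
  have hx : ‖y / r‖ < 1 := by rwa [norm_div, div_lt_one (norm_pos_iff.mpr hr)]
  have hval : 1 / (r + y) ^ s = (r ^ s)⁻¹ * ((1 + y / r) ^ s)⁻¹ := by
    rw [← mul_inv, ← mul_pow, mul_add, mul_div_cancel₀ _ hr, mul_one, one_div]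
  rw [hval]
  refine ((hasSum_negBinom_mul_pow s hx).mul_left (r ^ s)⁻¹).congr_fun fun l => ?_
  rw [div_pow, pow_add]
  field_simp

end BinomialSeries

section Decomposition

variable {M : Type*} [AddCommMonoid M]

theorem sum_range_mul_eq_sum_sum (f : ℕ → M) (P N : ℕ) :
    ∑ n ∈ range (P * N), f n = ∑ m ∈ range N, ∑ r ∈ range P, f (P * m + r) := by
  induction N with
  | zero => simp
  | succ N ih => rw [Nat.mul_succ, sum_range_add, ih, sum_range_succ]

theorem sum_Ioo_zero_eq_sum_range_ite (f : ℕ → M) (n : ℕ) :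
    ∑ i ∈ Ioo 0 n, f i = ∑ i ∈ range n, if i = 0 then 0 else f i := by
  have : Ioo 0 n = {i ∈ range n | i ≠ 0} := by
    ext i
    simp only [mem_Ioo, mem_filter, mem_range]
    omega
  simp only [this, sum_filter, ite_not]

theorem sum_Ioo_zero_mul_eq (f : ℕ → M) {P : ℕ} (hP : 0 < P) (N : ℕ) :
    ∑ n ∈ Ioo 0 (P * N), f n =
      ∑ m ∈ Ioo 0 N, f (P * m) + ∑ m ∈ range N, ∑ r ∈ Ioo 0 P, f (P * m + r) := by
  rw [sum_Ioo_zero_eq_sum_range_ite, sum_Ioo_zero_eq_sum_range_ite (fun m => f (P * m)),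
    sum_range_mul_eq_sum_sum, ← sum_add_distrib]
  refine sum_congr rfl fun m _ => ?_
  rw [sum_range_eq_add_Ico _ hP, ← zero_add 1, Ico_add_one_left_eq_Ioo]
  congr 1
  · simp [hP.ne']
  · exact sum_congr rfl fun r hr => if_neg (by simp at hr; omega)

end Decomposition

section PadicExpansion

variable {p : ℕ} [Fact p.Prime]

theorem norm_prime_pow_mul_lt_norm_natCast {k r : ℕ} (hr : ¬ p ^ k ∣ r) (m : ℕ) :
    ‖(p : ℚ_[p]) ^ k * m‖ < ‖(r : ℚ_[p])‖ := by
  have hle : ‖(p : ℚ_[p]) ^ k * m‖ ≤ (p : ℝ) ^ (-k : ℤ) := by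
    rw [norm_mul, Padic.norm_p_pow]
    exact mul_le_of_le_one_right (by positivity) (IsUltrametricDist.norm_natCast_le_one _ m)
  refine hle.trans_lt (lt_of_not_ge fun h => hr ?_)
  exact_mod_cast (Padic.norm_int_le_pow_iff_dvd (r : ℤ) k).mp (mod_cast h)

theorem prime_pow_mul_pow_mul_H1_eq (k N s : ℕ) :
    ((p : ℚ_[p]) ^ k * N) ^ s * H1 p (p ^ k * N) s
      = (N : ℚ_[p]) ^ s * H1 p N s + ∑ m ∈ range N, ∑ r ∈ Ioo 0 (p ^ k),
          ((p : ℚ_[p]) ^ k * N) ^ s * (1 / ((p ^ k * m + r : ℕ) : ℚ_[p]) ^ s) := by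
  have hp : p.Prime := Fact.out
  have hPne : (p : ℚ_[p]) ^ k ≠ 0 := pow_ne_zero k (Nat.cast_ne_zero.mpr hp.ne_zero)
  rw [H1, H1, sum_Ioo_zero_mul_eq _ (pow_pos hp.pos k), mul_add, mul_sum, mul_sum]
  simp only [mul_sum]
  congr 1
  refine sum_congr rfl fun m _ => ?_
  rw [Nat.cast_mul, Nat.cast_pow, mul_pow, mul_pow, mul_one_div, mul_one_div,
    mul_div_mul_left _ _ (pow_ne_zero s hPne)]

theorem hasSum_negBinom_mul_H1 (k N s : ℕ) :
    HasSum (fun l : ℕ => (negBinom s l : ℚ_[p]) * (N : ℚ_[p]) ^ s *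
        (∑ n ∈ range N, (n : ℚ_[p]) ^ l) * ((p : ℚ_[p]) ^ k) ^ (s + l) * H1 p (p ^ k) (s + l))
      (∑ m ∈ range N, ∑ r ∈ Ioo 0 (p ^ k),
        ((p : ℚ_[p]) ^ k * N) ^ s * (1 / ((p ^ k * m + r : ℕ) : ℚ_[p]) ^ s)) := by
  have hexp : ∀ m ∈ range N, ∀ r ∈ Ioo 0 (p ^ k), HasSum
      (fun l => (negBinom s l : ℚ_[p]) * (N : ℚ_[p]) ^ s * (m : ℚ_[p]) ^ l *
        ((p : ℚ_[p]) ^ k) ^ (s + l) * (1 / (r : ℚ_[p]) ^ (s + l)))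
      (((p : ℚ_[p]) ^ k * N) ^ s * (1 / ((p ^ k * m + r : ℕ) : ℚ_[p]) ^ s)) := by
    intro m _ r hr
    have hlt := norm_prime_pow_mul_lt_norm_natCast
      (Nat.not_dvd_of_pos_of_lt (mem_Ioo.1 hr).1 (mem_Ioo.1 hr).2) m
    rw [Nat.cast_add, Nat.cast_mul, Nat.cast_pow, add_comm]
    refine ((hasSum_negBinom_mul_pow_div s hlt).mul_left _).congr_fun fun l => ?_
    ring
  refine (hasSum_sum fun m hm => hasSum_sum fun r hr => hexp m hm r hr).congr_fun fun l => ?_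
  rw [H1, mul_sum (range N), sum_mul (range N), sum_mul_sum]

end PadicExpansion

theorem depth_one_multiplication_general (p : ℕ) [Fact p.Prime] (k N s : ℕ) :
    Summable (fun l : ℕ => (negBinom s l : ℚ_[p]) * (N : ℚ_[p]) ^ s *
        (∑ n ∈ Finset.range N, (n : ℚ_[p]) ^ l) * ((p : ℚ_[p]) ^ k) ^ (s + l) *
        H1 p (p ^ k) (s + l)) ∧
    ((p : ℚ_[p]) ^ k * (N : ℚ_[p])) ^ s * H1 p (p ^ k * N) s
      = (N : ℚ_[p]) ^ s * H1 p N s +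
        ∑' l : ℕ, (negBinom s l : ℚ_[p]) * (N : ℚ_[p]) ^ s *
          (∑ n ∈ Finset.range N, (n : ℚ_[p]) ^ l) * ((p : ℚ_[p]) ^ k) ^ (s + l) *
          H1 p (p ^ k) (s + l) := by
  have hsum := hasSum_negBinom_mul_H1 (p := p) k N s
  exact ⟨hsum.summable, by rw [prime_pow_mul_pow_mul_H1_eq, hsum.tsum_eq]⟩

/-- Depth-one multiplication of upper bounds:
`(p^k N)^s·H_{p^k N}(s) = N^s·H_N(s) +
 ∑_{l ≥ 0} binom(−s,l)·N^s·(∑_{0≤n<N} n^l)·(p^k)^{s+l}·H_{p^k}(s+l)`,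
the family indexed by `l` being summable in `ℚ_p`. -/
theorem depth_one_multiplication (p : ℕ) [Fact p.Prime] (k N s : ℕ)
    (hk : 1 ≤ k) (hN : 1 ≤ N) (hs : 1 ≤ s) :
    Summable (fun l : ℕ => (negBinom s l : ℚ_[p]) * (N : ℚ_[p]) ^ s *
        (∑ n ∈ Finset.range N, (n : ℚ_[p]) ^ l) * ((p : ℚ_[p]) ^ k) ^ (s + l) *
        H1 p (p ^ k) (s + l)) ∧
    ((p : ℚ_[p]) ^ k * (N : ℚ_[p])) ^ s * H1 p (p ^ k * N) s
      = (N : ℚ_[p]) ^ s * H1 p N s +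
        ∑' l : ℕ, (negBinom s l : ℚ_[p]) * (N : ℚ_[p]) ^ s *
          (∑ n ∈ Finset.range N, (n : ℚ_[p]) ^ l) * ((p : ℚ_[p]) ^ k) ^ (s + l) *
          H1 p (p ^ k) (s + l) :=
  depth_one_multiplication_general p k N s
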